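/- arXiv:2008.09553 — 5 statements merged into one kernel-verified Lean document; each statement's English description precedes it below -/
import Mathlib

section
/- Let $\psi_1, \dots, \psi_n > 0$ with $\mathfrak{s} = \sum_{i=1}^n \psi_i$, so $0 < \psi_i < \mathfrak{s}$ for each $i$. For $i \neq j$ define $\alpha_{ij} = -\sqrt{\psi_i \psi_j / ((\mathfrak{s} - \psi_i)(\mathfrak{s} - \psi_j))}$. Then for any pairwise distinct indices $i, j, k$ one has $\alpha_{ij}\alpha_{ik} - \alpha_{jk} \neq 0$ and $\dfrac{\alpha_{ij}\alpha_{ik}}{\alpha_{ij}\alpha_{ik} - \alpha_{jk}} = \dfrac{\psi_i}{\mathfrak{s}}$. -/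
/-!
Writing `aᵢ = ψᵢ / (s - ψᵢ)`, we have `αᵢⱼ = -√(aᵢ aⱼ)`, hence `αᵢⱼ αᵢₖ = aᵢ √(aⱼ aₖ)` and
`αᵢⱼ αᵢₖ - αⱼₖ = (aᵢ + 1) √(aⱼ aₖ)`. The ratio is therefore `aᵢ / (aᵢ + 1) = ψᵢ / s`.
-/

open Real Finset

lemma sqrt_mul_mul_sqrt_mul {a b : ℝ} (ha : 0 ≤ a) (hb : 0 ≤ b) (c : ℝ) :
    √(a * b) * √(a * c) = a * √(b * c) := by
  rw [sqrt_mul ha, sqrt_mul ha, sqrt_mul hb]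
  linear_combination √b * √c * mul_self_sqrt ha

lemma div_sub_div_div_add_one {x s : ℝ} (h : x ≠ s) :
    x / (s - x) / (x / (s - x) + 1) = x / s := by
  have hsx : s - x ≠ 0 := sub_ne_zero.2 h.symm
  rw [div_add_one hsx, add_sub_cancel, div_div_div_cancel_right₀ hsx]

/-- For positive `ψ` with sum `s` and `αᵢⱼ = -√(ψᵢψⱼ/((s-ψᵢ)(s-ψⱼ)))`, for pairwise
distinct `i,j,k` we have `αᵢⱼαᵢₖ - αⱼₖ ≠ 0` and `αᵢⱼαᵢₖ/(αᵢⱼαᵢₖ - αⱼₖ) = ψᵢ/s`. -/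
theorem alpha_ratio_recovers_psi (n : ℕ) (ψ : Fin n → ℝ) (hψ : ∀ i, 0 < ψ i)
    (s : ℝ) (hs : s = ∑ i, ψ i)
    (α : Fin n → Fin n → ℝ)
    (hα : ∀ i j, i ≠ j →
      α i j = -Real.sqrt (ψ i * ψ j / ((s - ψ i) * (s - ψ j)))) :
    ∀ i j k : Fin n, i ≠ j → i ≠ k → j ≠ k →
      α i j * α i k - α j k ≠ 0 ∧
      α i j * α i k / (α i j * α i k - α j k) = ψ i / s := by
  intro i j k hij hik hjk
  have hlt : ∀ l m, l ≠ m → ψ l < s := fun l m hlm =>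
    hs ▸ single_lt_sum hlm.symm (mem_univ l) (mem_univ m) (hψ m) fun l _ _ => (hψ l).le
  set a : Fin n → ℝ := fun l => ψ l / (s - ψ l)
  have ha : ∀ l m, l ≠ m → 0 < a l := fun l m hlm => div_pos (hψ l) (sub_pos.2 (hlt l m hlm))
  have hα' : ∀ l m, l ≠ m → α l m = -√(a l * a m) := fun l m hlm => by
    rw [hα l m hlm, div_mul_div_comm]
  have hnum : α i j * α i k = a i * √(a j * a k) := by
    rw [hα' i j hij, hα' i k hik, neg_mul_neg,
      sqrt_mul_mul_sqrt_mul (ha i j hij).le (ha j i hij.symm).le]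
  have hden : α i j * α i k - α j k = (a i + 1) * √(a j * a k) := by
    rw [hnum, hα' j k hjk]; ring
  have hroot : 0 < √(a j * a k) := sqrt_pos.2 (mul_pos (ha j i hij.symm) (ha k i hik.symm))
  refine ⟨hden ▸ (mul_pos (by linarith [ha i j hij]) hroot).ne', ?_⟩
  rw [hden, hnum, mul_div_mul_right _ _ hroot.ne', div_sub_div_div_add_one (hlt i j hij).ne]
end

section
/- Let $\psi_1, \dots, \psi_n > 0$, $\langle x, y \rangle_\psi = \sum_i \psi_i x_i y_i$, $p = (1,\dots,1)$, and $\mathfrak{g} = \{x \in \mathbb{R}^n : \langle p, x \rangle_\psi = 0\}$. Suppose $v \in \mathfrak{g}$, $v \neq 0$, and every coordinate $v_i$ satisfies the same quadratic equation $v_i^2 = \alpha v_i + \beta$ for fixed reals $\alpha, \beta$. Then the quadratic $t^2 = \alpha t + \beta$ has two distinct real roots $\sigma_+, \sigma_-$ and $\sigma_+ \sigma_- < 0$ (one root is positive and the other negative). -/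
open Finset

section WeightedSum

variable {ι R : Type*} [Fintype ι] [Ring R] [LinearOrder R] [IsStrictOrderedRing R]

theorem exists_pos_of_weighted_sum_eq_zero {w v : ι → R} (hw : ∀ i, 0 < w i) (hv : v ≠ 0)
    (hsum : ∑ i, w i * v i = 0) : ∃ i, 0 < v i := by
  by_contra! hnonpos
  have hterm : ∀ i, w i * v i ≤ 0 := fun i => mul_nonpos_of_nonneg_of_nonpos (hw i).le (hnonpos i)
  have hzero := (sum_eq_zero_iff_of_nonpos fun i _ => hterm i).1 hsum
  exact hv <| funext fun i =>
    (mul_eq_zero.1 (hzero i (mem_univ i))).resolve_left (hw i).ne'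

theorem exists_neg_of_weighted_sum_eq_zero {w v : ι → R} (hw : ∀ i, 0 < w i) (hv : v ≠ 0)
    (hsum : ∑ i, w i * v i = 0) : ∃ i, v i < 0 := by
  have hsum' : ∑ i, w i * (-v) i = 0 := by simp [hsum]
  obtain ⟨i, hi⟩ := exists_pos_of_weighted_sum_eq_zero hw (neg_ne_zero.2 hv) hsum'
  exact ⟨i, neg_pos.1 hi⟩

end WeightedSum

/-- If `v ≠ 0` lies in the hyperplane `⟨p, v⟩_ψ = 0` (with all `ψᵢ > 0`) and all its
coordinates satisfy `vᵢ² = α vᵢ + β`, then this quadratic has two distinct real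
roots of opposite signs. -/
theorem critical_point_roots (n : ℕ) (ψ : Fin n → ℝ) (hψ : ∀ i, 0 < ψ i)
    (v : Fin n → ℝ) (hv0 : v ≠ 0) (hvg : ∑ i, ψ i * v i = 0)
    (α β : ℝ) (hquad : ∀ i, v i ^ 2 = α * v i + β) :
    ∃ σp σm : ℝ, σp ≠ σm ∧ σp ^ 2 = α * σp + β ∧ σm ^ 2 = α * σm + β ∧
      σp * σm < 0 := by
  obtain ⟨i, hi⟩ := exists_pos_of_weighted_sum_eq_zero hψ hv0 hvg
  obtain ⟨j, hj⟩ := exists_neg_of_weighted_sum_eq_zero hψ hv0 hvg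
  exact ⟨v i, v j, (hj.trans hi).ne', hquad i, hquad j, mul_neg_of_pos_of_neg hi hj⟩
end

section
/- Let $\lambda \in \mathbb{R}$ and $v \in \mathbb{R}$, and consider the $3 \times 3$ real matrix $A = \begin{pmatrix} 0 & v & 0 \\ 0 & \lambda v & v \\ 0 & 0 & 0 \end{pmatrix}$. If $\lambda \neq 0$, then $\exp(A) = \begin{pmatrix} 1 & f & g \\ 0 & e^{\lambda v} & f \\ 0 & 0 & 1 \end{pmatrix}$, where $f = \lambda^{-1}(e^{\lambda v} - 1)$ and $g = \lambda^{-2}(e^{\lambda v} - 1 - \lambda v)$. -/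
/-!
If `A³ = c • A²` then `A ^ (n + 2) = c ^ n • A²`, so the exponential series of `A` collapses to
`1 + A + φ₂(c) • A²` with `φ₂(c) = ∑ cⁿ / (n + 2)!`; comparing with the same identity for the scalar
`c` gives `c² φ₂(c) = exp c - 1 - c`. The cusp block satisfies this with `c = λv`.
-/

open NormedSpace Nat

theorem pow_add_two_eq_of_pow_three_eq_smul {𝕂 𝔸 : Type*} [CommSemiring 𝕂] [Semiring 𝔸]
    [Algebra 𝕂 𝔸] {A : 𝔸} {c : 𝕂} (h : A ^ 3 = c • A ^ 2) (n : ℕ) :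
    A ^ (n + 2) = c ^ n • A ^ 2 := by
  induction n with
  | zero => simp
  | succ n ih => rw [pow_succ, ih, smul_mul_assoc, ← pow_succ, h, smul_smul, ← pow_succ]

section Phi₂

variable {𝕂 : Type*} [RCLike 𝕂]

/-- `(exp c - 1 - c) / c²`, written as a power series so that it is also right at `c = 0`. -/
noncomputable def phi₂ (c : 𝕂) : 𝕂 := ∑' n : ℕ, ((n + 2)! : 𝕂)⁻¹ * c ^ n

theorem summable_phi₂ (c : 𝕂) : Summable fun n : ℕ => ((n + 2)! : 𝕂)⁻¹ * c ^ n := by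
  refine .of_norm_bounded (Real.summable_pow_div_factorial ‖c‖) fun n => ?_
  rw [norm_mul, norm_inv, RCLike.norm_natCast, norm_pow, inv_mul_eq_div]
  gcongr
  exact Nat.le_add_right n 2

variable {𝔸 : Type*} [NormedRing 𝔸] [NormedAlgebra 𝕂 𝔸] [CompleteSpace 𝔸]

theorem exp_eq_of_pow_three_eq_smul {A : 𝔸} {c : 𝕂} (h : A ^ 3 = c • A ^ 2) :
    exp A = 1 + A + phi₂ c • A ^ 2 := by
  have tail : ∑' n : ℕ, ((n + 2)! : 𝕂)⁻¹ • A ^ (n + 2) = phi₂ c • A ^ 2 := by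
    have term (n : ℕ) : ((n + 2)! : 𝕂)⁻¹ • A ^ (n + 2) = (((n + 2)! : 𝕂)⁻¹ * c ^ n) • A ^ 2 := by
      rw [pow_add_two_eq_of_pow_three_eq_smul h, smul_smul]
    rw [tsum_congr term, (summable_phi₂ c).tsum_smul_const, phi₂]
  rw [congrFun (exp_eq_tsum 𝕂) A, ← (expSeries_summable' (𝕂 := 𝕂) A).sum_add_tsum_nat_add 2, tail]
  simp [Finset.sum_range_succ]

end Phi₂

theorem Real.exp_eq_one_add_add_sq_mul_phi₂ (c : ℝ) : Real.exp c = 1 + c + c ^ 2 * phi₂ c := by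
  rw [Real.exp_eq_exp_ℝ, exp_eq_of_pow_three_eq_smul (A := c) (c := c) (by ring), smul_eq_mul,
    mul_comm]

-- `exp` only depends on the topology, so any submultiplicative norm will do.
attribute [local instance] Matrix.linftyOpNormedRing Matrix.linftyOpNormedAlgebra

open NormedSpace in
/-- Matrix exponential of the `3×3` nilpotent-plus-diagonal block appearing in the
translation groups of generalized cusps. -/
theorem exp_cusp_block (lam v : ℝ) (hlam : lam ≠ 0) :
    NormedSpace.exp (!![0, v, 0; 0, lam * v, v; 0, 0, 0] : Matrix (Fin 3) (Fin 3) ℝ) =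
      !![1, lam⁻¹ * (Real.exp (lam * v) - 1),
          lam⁻¹ ^ 2 * (Real.exp (lam * v) - 1 - lam * v);
        0, Real.exp (lam * v), lam⁻¹ * (Real.exp (lam * v) - 1);
        0, 0, 1] := by
  set A : Matrix (Fin 3) (Fin 3) ℝ := !![0, v, 0; 0, lam * v, v; 0, 0, 0] with hA
  have hA2 : A ^ 2 = !![0, lam * v ^ 2, v ^ 2; 0, lam ^ 2 * v ^ 2, lam * v ^ 2; 0, 0, 0] := by
    rw [sq, hA, Matrix.mul_fin_three]
    simp only [mul_zero, zero_mul, add_zero, zero_add]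
    ring_nf
  have hA3 : A ^ 3 = (lam * v) • A ^ 2 := by
    rw [pow_succ, hA2, hA, Matrix.mul_fin_three]
    ext i j
    fin_cases i <;> fin_cases j <;> simp <;> ring
  refine (exp_eq_of_pow_three_eq_smul hA3).trans ?_
  rw [hA2, hA, Real.exp_eq_one_add_add_sq_mul_phi₂, Matrix.one_fin_three]
  ext i j
  fin_cases i <;> fin_cases j <;> simp <;> field_simp <;> ring
end

section
/- Let $A_n = \{\lambda \in \mathbb{R}^n : 0 \leq \lambda_0 \leq \lambda_1 \leq \cdots \leq \lambda_{n-1}\}$ and $\widetilde{A}_n = \{(\lambda, \kappa) \in A_n \times [0,1]^{n-1} : \lambda_0 = \lambda_i \kappa_i \text{ for all } 1 \leq i \leq n-1\}$, with projection $p_1(\lambda, \kappa) = \lambda$. Then: (a) $p_1$ is surjective; (b) if all coordinates of $\lambda$ are positive then $p_1^{-1}(\lambda)$ is a single point; (c) if $\lambda_i = 0$ exactly for $i \leq u$ (with $u \geq 0$, so $\lambda_0 = 0$), then $p_1^{-1}(\lambda) = \{\lambda\} \times ([0,1]^u \times \{0\}^{n-1-u})$; in particular every fiber of $p_1$ is compact.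 -/
/-!
The constraints `λ₀ = λ_{j+1} κ_j` each involve a single `κ_j`, so the fiber over `λ` is the
product of the sets `{x ∈ [0,1] | λ₀ = λ_{j+1} x}`. When `λ_{j+1} > 0` this is the single point
`λ₀ / λ_{j+1}`, which lies in `[0,1]` by monotonicity; when `λ_{j+1} = 0` monotonicity forces
`λ₀ = 0` and the factor is all of `[0,1]`. Being cut out of the cube `[0,1]^{n-1}` by closed
conditions, every fiber is compact.
-/

open Set

def weylChamber (m : ℕ) : Set (Fin (m + 1) → ℝ) :=
  {l | 0 ≤ l 0 ∧ Monotone l}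

def blownUpWeylChamber (m : ℕ) : Set ((Fin (m + 1) → ℝ) × (Fin m → ℝ)) :=
  {p | p.1 ∈ weylChamber m ∧ (∀ j, p.2 j ∈ Icc (0 : ℝ) 1) ∧
    ∀ j : Fin m, p.1 0 = p.1 j.succ * p.2 j}

variable {m : ℕ}

theorem exists_mem_Icc_eq_mul {a b : ℝ} (ha : 0 ≤ a) (hab : a ≤ b) :
    ∃ x ∈ Icc (0 : ℝ) 1, a = b * x := by
  rcases (ha.trans hab).eq_or_lt with hb | hb
  · exact ⟨1, right_mem_Icc.2 zero_le_one, by linarith⟩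
  · exact ⟨a / b, ⟨div_nonneg ha hb.le, div_le_one_of_le₀ hab hb.le⟩,
      (mul_div_cancel₀ a hb.ne').symm⟩

theorem exists_mk_mem_blownUpWeylChamber {l : Fin (m + 1) → ℝ} (hl : l ∈ weylChamber m) :
    ∃ κ, (l, κ) ∈ blownUpWeylChamber m := by
  choose κ hκ heq using fun j : Fin m =>
    exists_mem_Icc_eq_mul hl.1 (hl.2 (Fin.zero_le j.succ))
  exact ⟨κ, hl, hκ, heq⟩

theorem blownUpWeylChamber_fiber_subsingleton_of_pos {l : Fin (m + 1) → ℝ}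
    (hl : ∀ i, 0 < l i) :
    {κ | (l, κ) ∈ blownUpWeylChamber m}.Subsingleton :=
  fun _ ⟨_, _, hκ⟩ _ ⟨_, _, hκ'⟩ =>
    funext fun j => mul_left_cancel₀ (hl j.succ).ne' ((hκ j).symm.trans (hκ' j))

/-- Here `l 0 = 0`, so the constraint `0 = l (j + 1) * κ j` binds `κ j` only where
`l (j + 1) ≠ 0`, i.e. where `u < j + 1`. -/
theorem mk_mem_blownUpWeylChamber_iff_of_eq_zero_iff {l : Fin (m + 1) → ℝ}
    (hl : l ∈ weylChamber m) {u : ℕ} (hu : ∀ i : Fin (m + 1), l i = 0 ↔ (i : ℕ) ≤ u)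
    (κ : Fin m → ℝ) :
    (l, κ) ∈ blownUpWeylChamber m ↔
      (∀ j, κ j ∈ Icc (0 : ℝ) 1) ∧ ∀ j : Fin m, u < (j : ℕ) + 1 → κ j = 0 := by
  have hl0 : l 0 = 0 := (hu 0).2 (Nat.zero_le u)
  simp only [blownUpWeylChamber, mem_ofPred_eq, hl, true_and, hl0]
  refine and_congr_right fun _ => forall_congr' fun j => ?_
  rw [eq_comm, mul_eq_zero, hu, Fin.val_succ, or_iff_not_imp_left, not_le]

theorem isCompact_blownUpWeylChamber_fiber (l : Fin (m + 1) → ℝ) :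
    IsCompact {κ | (l, κ) ∈ blownUpWeylChamber m} := by
  refine (isCompact_univ_pi fun _ => isCompact_Icc).of_isClosed_subset ?_
    fun κ hκ => mem_univ_pi.2 hκ.2.1
  change IsClosed ({_κ | l ∈ weylChamber m} ∩ ({κ : Fin m → ℝ | ∀ j, κ j ∈ Icc (0 : ℝ) 1} ∩
    {κ : Fin m → ℝ | ∀ j, l 0 = l j.succ * κ j}))
  rw [ofPred_forall, ofPred_forall]
  exact isClosed_const.inter
    ((isClosed_iInter fun j => isClosed_Icc.preimage (continuous_apply j)).inter
      (isClosed_iInter fun j => isClosed_eq continuous_const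
        ((continuous_apply j).const_mul _)))

/-- The projection `p₁` from the blown-up Weyl chamber `Ã` to the Weyl chamber `A`:
(a) surjective; (b) injective fibers over `λ` with all positive coordinates;
(c) explicit fiber when `λᵢ = 0 ⟺ i ≤ u`; every fiber is compact. -/
theorem blown_up_weyl_fibers (m : ℕ)
    (A : Set (Fin (m + 1) → ℝ))
    (hA : A = {l | 0 ≤ l 0 ∧ Monotone l})
    (At : Set ((Fin (m + 1) → ℝ) × (Fin m → ℝ)))
    (hAt : At = {p | p.1 ∈ A ∧ (∀ j, p.2 j ∈ Set.Icc (0 : ℝ) 1) ∧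
      ∀ j : Fin m, p.1 0 = p.1 j.succ * p.2 j}) :
    (∀ l ∈ A, ∃ κ, (l, κ) ∈ At) ∧
    (∀ l ∈ A, (∀ i, 0 < l i) →
      ∀ κ κ' : Fin m → ℝ, (l, κ) ∈ At → (l, κ') ∈ At → κ = κ') ∧
    (∀ l ∈ A, ∀ u : ℕ, (∀ i : Fin (m + 1), l i = 0 ↔ (i : ℕ) ≤ u) →
      ∀ κ : Fin m → ℝ, ((l, κ) ∈ At ↔
        ((∀ j, κ j ∈ Set.Icc (0 : ℝ) 1) ∧
          ∀ j : Fin m, u < (j : ℕ) + 1 → κ j = 0))) ∧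
    (∀ l : Fin (m + 1) → ℝ, IsCompact {κ : Fin m → ℝ | (l, κ) ∈ At}) := by
  subst hA hAt
  exact ⟨fun _ hl => exists_mk_mem_blownUpWeylChamber hl,
    fun _ _ hpos _ _ hκ hκ' => blownUpWeylChamber_fiber_subsingleton_of_pos hpos hκ hκ',
    fun _ hl _ hu => mk_mem_blownUpWeylChamber_iff_of_eq_zero_iff hl hu,
    isCompact_blownUpWeylChamber_fiber⟩
end

section
/- Let $\kappa \in \mathbb{R}^m$ with $\kappa \neq 0$, and define $T : \mathbb{R}^m \to \mathbb{R}^m$ by $T(v) = v + \alpha \langle v, \kappa \rangle \kappa$, where $\alpha = \|\kappa\|^{-2}\big(-1 + (1 + \|\kappa\|^2)^{-1/2}\big)$. Then for every $v \in \mathbb{R}^m$, $\|T v\|^2 + \langle T v, \kappa \rangle^2 = \|v\|^2$; that is, $T$ is an isometry from the standard quadratic form to the quadratic form $\beta(w) = \|w\|^2 + \langle w, \kappa \rangle^2$. -/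
/-!
Expanding, `β(Tv) = ‖v‖² + ⟨v,κ⟩² q(α)` with `q(α) = 2α + α²K + (1 + αK)²` and `K = ‖κ‖²`.
Since `K q(α) = (1 + αK)² (1 + K) - 1` and the given `α` is the one with
`1 + αK = (1 + K)^{-1/2}`, the coefficient `q(α)` vanishes.
-/

open Matrix

theorem dotProduct_add_smul_horosphere {ι R : Type*} [Fintype ι] [CommRing R]
    (v κ : ι → R) (α : R) :
    let w := v + (α * (v ⬝ᵥ κ)) • κ
    w ⬝ᵥ w + (w ⬝ᵥ κ) ^ 2
      = v ⬝ᵥ v + (v ⬝ᵥ κ) ^ 2 * (2 * α + α ^ 2 * (κ ⬝ᵥ κ) + (1 + α * (κ ⬝ᵥ κ)) ^ 2) := by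
  simp only [add_dotProduct, dotProduct_add, smul_dotProduct, dotProduct_smul, smul_eq_mul,
    dotProduct_comm κ v]
  ring

theorem horosphere_coeff_eq_zero {K α : ℝ} (hK : K ≠ 0) (hK₁ : 0 < 1 + K)
    (hα : α = K⁻¹ * (-1 + (√(1 + K))⁻¹)) :
    2 * α + α ^ 2 * K + (1 + α * K) ^ 2 = 0 := by
  have hs : √(1 + K) ^ 2 = 1 + K := Real.sq_sqrt hK₁.le
  have hs₀ : √(1 + K) ≠ 0 := (Real.sqrt_pos.2 hK₁).ne'
  subst hα
  field_simp
  linear_combination (-1) * hs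

/-- The map `T v = v + α ⟨v,κ⟩ κ`, with
`α = ‖κ‖⁻²(-1 + (1+‖κ‖²)^{-1/2})`, is an isometry from the standard quadratic form
to `β(w) = ‖w‖² + ⟨w,κ⟩²`. -/
theorem isometry_to_horosphere_form {m : ℕ} (κ : Fin m → ℝ) (hκ : κ ≠ 0)
    (α : ℝ)
    (hα : α = (∑ i, κ i ^ 2)⁻¹ * (-1 + (Real.sqrt (1 + ∑ i, κ i ^ 2))⁻¹))
    (T : (Fin m → ℝ) → (Fin m → ℝ))
    (hT : ∀ v, T v = v + (α * ∑ i, v i * κ i) • κ) :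
    ∀ v : Fin m → ℝ,
      (∑ i, T v i ^ 2) + (∑ i, T v i * κ i) ^ 2 = ∑ i, v i ^ 2 := by
  have hsq (u : Fin m → ℝ) : ∑ i, u i ^ 2 = u ⬝ᵥ u := by simp only [dotProduct, sq]
  have hK : κ ⬝ᵥ κ ≠ 0 := fun h => hκ (dotProduct_self_eq_zero.1 h)
  have hK₁ : 0 < 1 + κ ⬝ᵥ κ := by
    have : 0 ≤ κ ⬝ᵥ κ := Finset.sum_nonneg fun i _ => mul_self_nonneg (κ i)
    linarith
  rw [hsq κ] at hα
  intro v
  have hTv : T v = v + (α * (v ⬝ᵥ κ)) • κ := hT v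
  calc (∑ i, T v i ^ 2) + (∑ i, T v i * κ i) ^ 2 = T v ⬝ᵥ T v + (T v ⬝ᵥ κ) ^ 2 := by
        rw [hsq]; rfl
    _ = v ⬝ᵥ v := by
        rw [hTv, dotProduct_add_smul_horosphere, horosphere_coeff_eq_zero hK hK₁ hα]
        ring
    _ = ∑ i, v i ^ 2 := (hsq v).symm
end
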